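/- arXiv:2511.16226 — 4 statements merged into one kernel-verified Lean document; each statement's English description precedes it below -/
import Mathlib

section
/- Let γ' ∈ (0,1), let H be a real number with H(1 − √γ') ≥ 1, let τ ≥ 1 and t₀ be integers with t₀ ≥ max(4H, τ), and set α_t = H/(t + t₀) and β̃_{h,t} = α_h ∏_{l=h+1}^{t} (1 − α_l) (empty product equal to 1). Let Z > 0, C_M ≥ 0, and let (ξ_t)_{t≥τ} be a sequence of nonnegative reals with ξ_τ ≤ 2Z such that for every t ≥ τ: ξ_{t+1} ≤ ((τ + t₀)/(t + 1 + t₀))^H · ξ_τ + γ' ∑_{h=τ}^{t} β̃_{h,t} ξ_h + C_M/√(t + 1 + t₀). Then, with C_ξ = 2C_M/(1 − γ') and C'_ξ = 4Z(τ + t₀)/(1 − γ'), for every T ≥ τ: ξ_T ≤ C_ξ/√(T + t₀) + C'_ξ/(T + t₀). -/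
/-!
The bound `B T = C_ξ/√(T+t₀) + C'_ξ/(T+t₀)` is proved by strong induction on `T`. Along a
sequence that decreases by at most the factor `(s+t₀)/(s+1+t₀)` per step, as `B` does, the weights
`β̃_{h,t}` have total mass at most `H/(H-1)` against the next value, so the weighted sum in the
recursion is at most `H/(H-1) · B(t+1)`, and `H(1-√γ') ≥ 1` turns `γ' H/(H-1)` into `√γ'`.
The constants are chosen so that `C_M + √γ' C_ξ ≤ C_ξ` and `2Z(τ+t₀) + √γ' C'_ξ ≤ C'_ξ`, which
absorbs the noise term and the initial term `((τ+t₀)/(t+1+t₀))^H ξ_τ ≤ 2Z(τ+t₀)/(t+1+t₀)`.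
-/

open Finset Real

-- `stepSize H t₀ l` is `α_l` and `recursionWeight H t₀ h t` is `β̃_{h,t}`.
noncomputable def stepSize (H : ℝ) (t₀ l : ℕ) : ℝ := H / ((l : ℝ) + t₀)

noncomputable def recursionWeight (H : ℝ) (t₀ h t : ℕ) : ℝ :=
  stepSize H t₀ h * ∏ l ∈ Icc (h + 1) t, (1 - stepSize H t₀ l)

section RecursionWeight

variable {H : ℝ} {t₀ : ℕ}

theorem stepSize_le_one {l : ℕ} (hl : H ≤ l + t₀) : stepSize H t₀ l ≤ 1 :=
  div_le_one_of_le₀ hl (by positivity)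

theorem recursionWeight_self (t : ℕ) : recursionWeight H t₀ t t = stepSize H t₀ t := by
  simp [recursionWeight]

theorem recursionWeight_succ_right {h t : ℕ} (hht : h ≤ t) :
    recursionWeight H t₀ h (t + 1) = recursionWeight H t₀ h t * (1 - stepSize H t₀ (t + 1)) := by
  rw [recursionWeight, recursionWeight, prod_Icc_succ_top (by omega), mul_assoc]

theorem recursionWeight_nonneg {h : ℕ} (hH : 0 ≤ H) (hHh : H ≤ h + t₀) (t : ℕ) :
    0 ≤ recursionWeight H t₀ h t := by
  refine mul_nonneg (by unfold stepSize; positivity) (prod_nonneg fun l hl => ?_)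
  have hhl : (h : ℝ) ≤ l := by exact_mod_cast (mem_Icc.mp hl).1.trans' h.le_succ
  exact sub_nonneg.mpr (stepSize_le_one (by linarith))

/-- `K = H/(H-1)` is stable under the weight recursion: `K (1 - α) + α = K (1 - 1/x)` for
`α = H/x`. -/
theorem sum_recursionWeight_mul_le {τ : ℕ} {g : ℕ → ℝ} (hH : 1 < H) (hτ : 2 * H ≤ τ + t₀)
    (hg0 : ∀ s, τ ≤ s → 0 ≤ g s)
    (hg : ∀ s, τ ≤ s → ((s : ℝ) + t₀) / ((s : ℝ) + t₀ + 1) * g s ≤ g (s + 1))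
    {t : ℕ} (ht : τ ≤ t) :
    ∑ h ∈ Icc τ t, recursionWeight H t₀ h t * g h ≤ H / (H - 1) * g (t + 1) := by
  have hH0 : 0 < H - 1 := by linarith
  induction t, ht using Nat.le_induction with
  | base =>
    set c : ℝ := (τ : ℝ) + t₀
    have hc : 1 ≤ c := by linarith
    have hweight : H / c ≤ H / (H - 1) * (c / (c + 1)) := by
      have : (H - 1) * (c + 1) ≤ c * c := by
        nlinarith [mul_le_mul_of_nonneg_right (show H - 1 ≤ c / 2 - 1 by linarith)
          (show 0 ≤ c + 1 by linarith)]
      rw [div_mul_div_comm, div_le_div_iff₀ (by linarith) (by positivity)]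
      nlinarith
    rw [Icc_self, sum_singleton, recursionWeight_self, stepSize]
    calc H / c * g τ ≤ H / (H - 1) * (c / (c + 1)) * g τ :=
          mul_le_mul_of_nonneg_right hweight (hg0 τ le_rfl)
      _ ≤ H / (H - 1) * g (τ + 1) := by
          rw [mul_assoc]
          exact mul_le_mul_of_nonneg_left (hg τ le_rfl) (by positivity)
  | succ t ht ih =>
    set x : ℝ := (t : ℝ) + 1 + t₀
    have hx : 2 * H ≤ x := by
      have : (τ : ℝ) ≤ t := by exact_mod_cast ht
      linarith
    have hx0 : 0 < x := by linarith
    have hα : stepSize H t₀ (t + 1) = H / x := by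
      rw [stepSize, Nat.cast_succ]
    have hα1 : 0 ≤ 1 - H / x := sub_nonneg.mpr (div_le_one_of_le₀ (by linarith) hx0.le)
    have hdecay : (x - 1) / x ≤ x / (x + 1) := by
      rw [div_le_div_iff₀ hx0 (by linarith)]
      nlinarith
    have hshift : ∀ h ∈ Icc τ t, recursionWeight H t₀ h (t + 1) * g h
        = recursionWeight H t₀ h t * g h * (1 - stepSize H t₀ (t + 1)) := fun h hh => by
      rw [recursionWeight_succ_right (mem_Icc.mp hh).2, mul_right_comm]
    rw [sum_Icc_succ_top (by omega), recursionWeight_self, sum_congr rfl hshift, ← sum_mul, hα]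
    calc (∑ h ∈ Icc τ t, recursionWeight H t₀ h t * g h) * (1 - H / x) + H / x * g (t + 1)
        ≤ H / (H - 1) * g (t + 1) * (1 - H / x) + H / x * g (t + 1) := by
          gcongr
      _ = H / (H - 1) * ((x - 1) / x * g (t + 1)) := by
          field_simp
          ring
      _ ≤ H / (H - 1) * (x / (x + 1) * g (t + 1)) := by
          gcongr
          exact hg0 _ (by omega)
      _ ≤ H / (H - 1) * g (t + 1 + 1) := by
          gcongr
          simpa only [Nat.cast_succ] using hg (t + 1) (by omega)

end RecursionWeight

theorem add_sqrt_mul_two_mul_div_le {γ C : ℝ} (hγ0 : 0 ≤ γ) (hγ1 : γ < 1) (hC : 0 ≤ C) :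
    C + √γ * (2 * C / (1 - γ)) ≤ 2 * C / (1 - γ) := by
  have hγ : √γ ^ 2 = γ := sq_sqrt hγ0
  have h1γ : 0 < 1 - γ := by linarith
  have hnum : C * (1 - γ) + √γ * (2 * C) ≤ 2 * C := by
    nlinarith [mul_nonneg hC (sq_nonneg (1 - √γ))]
  calc C + √γ * (2 * C / (1 - γ)) = (C * (1 - γ) + √γ * (2 * C)) / (1 - γ) := by
        field_simp
    _ ≤ 2 * C / (1 - γ) := div_le_div_of_nonneg_right hnum h1γ.le

theorem one_lt_of_one_le_mul_one_sub_sqrt {γ H : ℝ} (hγ0 : 0 < γ) (hγ1 : γ < 1)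
    (hH : 1 ≤ H * (1 - √γ)) : 1 < H := by
  have hs0 : 0 < √γ := sqrt_pos.mpr hγ0
  have hs1 : √γ < 1 := by rw [sqrt_lt' one_pos]; linarith
  have hH0 : 0 < H := pos_of_mul_pos_left (b := 1 - √γ) (by linarith) (by linarith)
  nlinarith [mul_pos hH0 hs0]

theorem mul_div_sub_one_le_sqrt {γ H : ℝ} (hγ0 : 0 < γ) (hγ1 : γ < 1)
    (hH : 1 ≤ H * (1 - √γ)) : γ * (H / (H - 1)) ≤ √γ := by
  have hH1 : 0 < H - 1 := by linarith [one_lt_of_one_le_mul_one_sub_sqrt hγ0 hγ1 hH]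
  rw [mul_div_assoc', div_le_iff₀ hH1]
  calc γ * H = √γ * (√γ * H) := by rw [← mul_assoc, mul_self_sqrt hγ0.le]
    _ ≤ √γ * (H - 1) := mul_le_mul_of_nonneg_left (by linarith [mul_sub H 1 √γ]) (sqrt_nonneg γ)

noncomputable def errorBound (A A' x : ℝ) : ℝ := A / √x + A' / x

section ErrorBound

variable {A A' x : ℝ}

theorem errorBound_nonneg (hA : 0 ≤ A) (hA' : 0 ≤ A') (hx : 0 ≤ x) : 0 ≤ errorBound A A' x := by
  unfold errorBound; positivity

theorem div_add_one_mul_errorBound_le (hA : 0 ≤ A) (hx : 0 < x) :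
    x / (x + 1) * errorBound A A' x ≤ errorBound A A' (x + 1) := by
  have hsqrt : x / (x + 1) / √x ≤ 1 / √(x + 1) := by
    rw [div_right_comm, div_sqrt, ← sqrt_div_self']
    gcongr
    linarith
  have hlin : x / (x + 1) * (A' / x) = A' / (x + 1) := by
    field_simp
  calc x / (x + 1) * errorBound A A' x = A * (x / (x + 1) / √x) + x / (x + 1) * (A' / x) := by
        unfold errorBound; ring
    _ ≤ A * (1 / √(x + 1)) + A' / (x + 1) := by
        rw [hlin]; gcongr
    _ = errorBound A A' (x + 1) := by
        unfold errorBound; ring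

theorem two_mul_le_errorBound {γ Z : ℝ} (hA : 0 ≤ A) (hZ : 0 ≤ Z) (hγ0 : 0 ≤ γ) (hγ1 : γ < 1)
    (hx : 0 < x) : 2 * Z ≤ errorBound A (4 * Z * x / (1 - γ)) x := by
  have h1γ : 0 < 1 - γ := by linarith
  have hdiv : 4 * Z * x / (1 - γ) / x = 4 * Z / (1 - γ) := by field_simp
  calc 2 * Z ≤ 4 * Z / (1 - γ) := by rw [le_div_iff₀ h1γ]; nlinarith
    _ ≤ errorBound A (4 * Z * x / (1 - γ)) x := by
        rw [errorBound, hdiv]; exact le_add_of_nonneg_left (by positivity)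

end ErrorBound

theorem rpow_mul_add_mul_add_le_errorBound {γ H Z C c x ξ S : ℝ} (hγ0 : 0 < γ) (hγ1 : γ < 1)
    (hH : 1 ≤ H * (1 - √γ)) (hZ : 0 ≤ Z) (hC : 0 ≤ C) (hc : 0 ≤ c) (hcx : c ≤ x)
    (hξ0 : 0 ≤ ξ) (hξ : ξ ≤ 2 * Z)
    (hS : S ≤ H / (H - 1) * errorBound (2 * C / (1 - γ)) (4 * Z * c / (1 - γ)) x) :
    (c / x) ^ H * ξ + γ * S + C / √x ≤ errorBound (2 * C / (1 - γ)) (4 * Z * c / (1 - γ)) x := by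
  set A := 2 * C / (1 - γ)
  set A' := 4 * Z * c / (1 - γ)
  have h1γ : 0 < 1 - γ := by linarith
  have hx : 0 ≤ x := hc.trans hcx
  have hH1 : 1 ≤ H := (one_lt_of_one_le_mul_one_sub_sqrt hγ0 hγ1 hH).le
  have hinit : (c / x) ^ H * ξ ≤ 2 * Z * c / x :=
    calc (c / x) ^ H * ξ ≤ c / x * (2 * Z) :=
          mul_le_mul (rpow_le_self_of_le_one (by positivity) (div_le_one_of_le₀ hcx hx) hH1) hξ
            hξ0 (by positivity)
      _ = 2 * Z * c / x := by ring
  have hweights : γ * S ≤ √γ * errorBound A A' x :=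
    calc γ * S ≤ γ * (H / (H - 1)) * errorBound A A' x := by
          rw [mul_assoc]; exact mul_le_mul_of_nonneg_left hS hγ0.le
      _ ≤ √γ * errorBound A A' x :=
          mul_le_mul_of_nonneg_right (mul_div_sub_one_le_sqrt hγ0 hγ1 hH)
            (errorBound_nonneg (by positivity) (by positivity) hx)
  have hA : C + √γ * A ≤ A := add_sqrt_mul_two_mul_div_le hγ0.le hγ1 hC
  have hA' : 2 * Z * c + √γ * A' ≤ A' := by
    have hA'eq : A' = 2 * (2 * Z * c) / (1 - γ) := by ring
    rw [hA'eq]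
    exact add_sqrt_mul_two_mul_div_le hγ0.le hγ1 (by positivity)
  calc (c / x) ^ H * ξ + γ * S + C / √x ≤ 2 * Z * c / x + √γ * errorBound A A' x + C / √x := by
        gcongr
    _ = (C + √γ * A) / √x + (2 * Z * c + √γ * A') / x := by
        unfold errorBound; ring
    _ ≤ errorBound A A' x :=
        add_le_add (div_le_div_of_nonneg_right hA (sqrt_nonneg x))
          (div_le_div_of_nonneg_right hA' hx)

theorem stmt_1_general (γ' H Z C_M : ℝ) (τ t₀ : ℕ)
    (hγ' : γ' ∈ Set.Ioo (0 : ℝ) 1)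
    (hH : 1 ≤ H * (1 - Real.sqrt γ'))
    (ht₀ : max (4 * H) (τ : ℝ) ≤ (t₀ : ℝ))
    (hZ : 0 < Z) (hCM : 0 ≤ C_M)
    (ξ : ℕ → ℝ) (hξnn : ∀ t, 0 ≤ ξ t) (hξτ : ξ τ ≤ 2 * Z)
    (hrec : ∀ t, τ ≤ t →
      ξ (t + 1) ≤
        (((τ : ℝ) + t₀) / ((t : ℝ) + 1 + t₀)) ^ H * ξ τ
        + γ' * ∑ h ∈ Finset.Icc τ t,
            ((H / ((h : ℝ) + t₀)) * ∏ l ∈ Finset.Icc (h + 1) t, (1 - H / ((l : ℝ) + t₀))) * ξ h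
        + C_M / Real.sqrt ((t : ℝ) + 1 + t₀)) :
    ∀ T, τ ≤ T →
      ξ T ≤ (2 * C_M / (1 - γ')) / Real.sqrt ((T : ℝ) + t₀)
            + (4 * Z * ((τ : ℝ) + t₀) / (1 - γ')) / ((T : ℝ) + t₀) := by
  obtain ⟨hγ0, hγ1⟩ := hγ'
  have hH1 : 1 < H := one_lt_of_one_le_mul_one_sub_sqrt hγ0 hγ1 hH
  have h4H : 4 * H ≤ t₀ := le_of_max_le_left ht₀
  have ht₀pos : (0 : ℝ) < t₀ := by linarith
  set A := 2 * C_M / (1 - γ')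
  set A' := 4 * Z * ((τ : ℝ) + t₀) / (1 - γ')
  have hA : 0 ≤ A := div_nonneg (by positivity) (by linarith)
  have hA' : 0 ≤ A' := div_nonneg (by positivity) (by linarith)
  set B : ℕ → ℝ := fun s => errorBound A A' ((s : ℝ) + t₀)
  have hB : ∀ s : ℕ, ((s : ℝ) + t₀) / ((s : ℝ) + t₀ + 1) * B s ≤ B (s + 1) := fun s => by
    simpa only [B, Nat.cast_succ, add_right_comm] using
      div_add_one_mul_errorBound_le hA (by positivity : 0 < (s : ℝ) + t₀)
  intro T hT
  show ξ T ≤ B T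
  induction T using Nat.strong_induction_on with
  | _ T ih =>
  obtain rfl | hτT := hT.eq_or_lt
  · exact hξτ.trans (two_mul_le_errorBound hA hZ.le hγ0.le hγ1 (by positivity))
  obtain ⟨t, rfl⟩ := Nat.exists_eq_add_one_of_ne_zero (by omega : T ≠ 0)
  have hsum : ∑ h ∈ Icc τ t, recursionWeight H t₀ h t * ξ h ≤ H / (H - 1) * B (t + 1) := by
    refine (sum_le_sum fun h hh => ?_).trans <| sum_recursionWeight_mul_le hH1 (by linarith)
      (fun s _ => errorBound_nonneg hA hA' (by positivity)) (fun s _ => hB s) (by omega)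
    obtain ⟨hτh, hht⟩ := mem_Icc.mp hh
    exact mul_le_mul_of_nonneg_left (ih h (by omega) hτh)
      (recursionWeight_nonneg (by linarith) (by linarith [(h.cast_nonneg : (0 : ℝ) ≤ h)]) t)
  have hτt : (τ : ℝ) ≤ t := by exact_mod_cast Nat.le_of_lt_succ hτT
  have hstep := hrec t (by omega)
  rw [← Nat.cast_succ] at hstep
  exact hstep.trans <| rpow_mul_add_mul_add_le_errorBound hγ0 hγ1 hH hZ.le hCM (by positivity)
    (by push_cast; linarith) (hξnn τ) hξτ hsum

/-- Deterministic induction at the core of the finite-time convergence theorem for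
SOR minimax Q-learning. Here `α_t = H/(t+t₀)`,
`β̃_{h,t} = α_h ∏_{l=h+1}^{t} (1 - α_l)` (empty products equal 1), and `ξ_t` is the
error sequence; `^ H` denotes the real power `Real.rpow`. -/
theorem stmt_1 (γ' H Z C_M : ℝ) (τ t₀ : ℕ)
    (hγ' : γ' ∈ Set.Ioo (0 : ℝ) 1)
    (hH : 1 ≤ H * (1 - Real.sqrt γ'))
    (hτ : 1 ≤ τ)
    (ht₀ : max (4 * H) (τ : ℝ) ≤ (t₀ : ℝ))
    (hZ : 0 < Z) (hCM : 0 ≤ C_M)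
    (ξ : ℕ → ℝ) (hξnn : ∀ t, 0 ≤ ξ t) (hξτ : ξ τ ≤ 2 * Z)
    (hrec : ∀ t, τ ≤ t →
      ξ (t + 1) ≤
        (((τ : ℝ) + t₀) / ((t : ℝ) + 1 + t₀)) ^ H * ξ τ
        + γ' * ∑ h ∈ Finset.Icc τ t,
            ((H / ((h : ℝ) + t₀)) * ∏ l ∈ Finset.Icc (h + 1) t, (1 - H / ((l : ℝ) + t₀))) * ξ h
        + C_M / Real.sqrt ((t : ℝ) + 1 + t₀)) :
    ∀ T, τ ≤ T →
      ξ T ≤ (2 * C_M / (1 - γ')) / Real.sqrt ((T : ℝ) + t₀)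
            + (4 * Z * ((τ : ℝ) + t₀) / (1 - γ')) / ((T : ℝ) + t₀) :=
  stmt_1_general γ' H Z C_M τ t₀ hγ' hH ht₀ hZ hCM ξ hξnn hξτ hrec
end

section
/- Let d ≥ 1 and equip ℝ^d with the sup norm ‖x‖ = max_i |x_i|. Let γ' ∈ (0,1) and let F : ℝ^d → ℝ^d satisfy ‖F(x) − F(y)‖ ≤ γ'‖x − y‖ for all x, y, with fixed point θ* (F(θ*) = θ*). Let τ ≥ 0 be an integer, let (α_t)_{t≥τ} be reals in [0,1], and let (θ_t)_{t≥τ}, (M_t)_{t≥τ} be sequences in ℝ^d satisfying θ_{t+1} = (1 − α_t)θ_t + α_t(F(θ_t) + M_t) for all t ≥ τ. Set ξ_t = ‖θ_t − θ*‖, β_{τ−1,t} = ∏_{h=τ}^{t}(1 − α_h), and β̃_{h,t} = α_h ∏_{l=h+1}^{t}(1 − α_l) (empty product equal to 1). Then for every t ≥ τ: ξ_{t+1} ≤ β_{τ−1,t} ξ_τ + γ' ∑_{h=τ}^{t} β̃_{h,t} ξ_h + ‖∑_{h=τ}^{t} β̃_{h,t} M_h‖. -/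
/-!
Writing `u_t = θ_t - θ*` and using `F θ* = θ*`, the recursion reads
`u_{t+1} = (1 - α_t) u_t + α_t ((F θ_t - F θ*) + M_t)`. Unrolling this linear recursion expresses
`u_{t+1}` exactly as `β_{τ-1,t} u_τ + ∑_h β̃_{h,t} (F θ_h - F θ*) + ∑_h β̃_{h,t} M_h`; the weights are
nonnegative because `α_h ∈ [0, 1]`, so the triangle inequality and the contraction property of `F`
give the bound.
-/

open Finset

theorem relaxation_eq_prod_smul_add_sum {R E : Type*} [CommRing R] [AddCommGroup E] [Module R E]
    (τ : ℕ) (α : ℕ → R) (u y : ℕ → E)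
    (hrec : ∀ t, τ ≤ t → u (t + 1) = (1 - α t) • u t + α t • y t) :
    ∀ t, τ ≤ t → u (t + 1) = (∏ h ∈ Icc τ t, (1 - α h)) • u τ
      + ∑ h ∈ Icc τ t, (α h * ∏ l ∈ Icc (h + 1) t, (1 - α l)) • y h := by
  intro t ht
  induction t, ht using Nat.le_induction with
  | base => simp [hrec τ le_rfl]
  | succ t ht ih =>
    have hτ : τ ≤ t + 1 := ht.trans t.le_succ
    have hweight : ∀ h ∈ Icc τ t, (α h * ∏ l ∈ Icc (h + 1) (t + 1), (1 - α l))
        = (1 - α (t + 1)) * (α h * ∏ l ∈ Icc (h + 1) t, (1 - α l)) := by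
      intro h hh
      rw [prod_Icc_succ_top (Nat.succ_le_succ (mem_Icc.1 hh).2)]
      ring
    rw [hrec (t + 1) hτ, ih, prod_Icc_succ_top hτ, sum_Icc_succ_top hτ, sum_congr rfl
      (fun h hh => congrArg (· • y h) (hweight h hh)), Icc_eq_empty_of_lt (t + 1).lt_succ_self,
      prod_empty, mul_one, smul_add, smul_sum]
    simp only [smul_smul, mul_comm (1 - α (t + 1)) (∏ h ∈ Icc τ t, (1 - α h))]
    abel

theorem norm_sum_smul_sub_le_of_lipschitz {ι E : Type*} [SeminormedAddCommGroup E]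
    [NormedSpace ℝ E] {γ : ℝ} {F : E → E} (hF : ∀ x y, ‖F x - F y‖ ≤ γ * ‖x - y‖)
    (s : Finset ι) (w : ι → ℝ) (hw : ∀ i ∈ s, 0 ≤ w i) (x : ι → E) (z : E) :
    ‖∑ i ∈ s, w i • (F (x i) - F z)‖ ≤ γ * ∑ i ∈ s, w i * ‖x i - z‖ := by
  calc ‖∑ i ∈ s, w i • (F (x i) - F z)‖
      ≤ ∑ i ∈ s, w i * ‖F (x i) - F z‖ := by
        refine (norm_sum_le _ _).trans (sum_le_sum fun i hi => ?_)
        rw [norm_smul, Real.norm_of_nonneg (hw i hi)]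
    _ ≤ ∑ i ∈ s, w i * (γ * ‖x i - z‖) :=
        sum_le_sum fun i hi => mul_le_mul_of_nonneg_left (hF _ _) (hw i hi)
    _ = γ * ∑ i ∈ s, w i * ‖x i - z‖ := by
        rw [mul_sum]
        exact sum_congr rfl fun i _ => by ring

theorem stmt_2_general (d : ℕ) (γ' : ℝ)
    (F : (Fin d → ℝ) → (Fin d → ℝ))
    (hF : ∀ x y : Fin d → ℝ, ‖F x - F y‖ ≤ γ' * ‖x - y‖)
    (θstar : Fin d → ℝ) (hfix : F θstar = θstar)
    (τ : ℕ) (α : ℕ → ℝ) (hα : ∀ t, τ ≤ t → α t ∈ Set.Icc (0 : ℝ) 1)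
    (θ M : ℕ → Fin d → ℝ)
    (hrec : ∀ t, τ ≤ t → θ (t + 1) = (1 - α t) • θ t + α t • (F (θ t) + M t)) :
    ∀ t, τ ≤ t →
      ‖θ (t + 1) - θstar‖ ≤
        (∏ h ∈ Finset.Icc τ t, (1 - α h)) * ‖θ τ - θstar‖
        + γ' * ∑ h ∈ Finset.Icc τ t,
            (α h * ∏ l ∈ Finset.Icc (h + 1) t, (1 - α l)) * ‖θ h - θstar‖
        + ‖∑ h ∈ Finset.Icc τ t, (α h * ∏ l ∈ Finset.Icc (h + 1) t, (1 - α l)) • M h‖ := by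
  intro t ht
  have hunroll := relaxation_eq_prod_smul_add_sum τ α (fun s => θ s - θstar)
    (fun s => (F (θ s) - F θstar) + M s)
    (fun s hs => by simp only [hrec s hs, hfix]; module) t ht
  have hone_sub : ∀ l, τ ≤ l → 0 ≤ 1 - α l := fun l hl => sub_nonneg.2 (hα l hl).2
  have hβ : 0 ≤ ∏ h ∈ Icc τ t, (1 - α h) :=
    prod_nonneg fun h hh => hone_sub h (mem_Icc.1 hh).1
  have hβtilde : ∀ h ∈ Icc τ t, 0 ≤ α h * ∏ l ∈ Icc (h + 1) t, (1 - α l) := fun h hh =>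
    mul_nonneg (hα h (mem_Icc.1 hh).1).1 <| prod_nonneg fun l hl =>
      hone_sub l ((mem_Icc.1 hh).1.trans (h.le_succ.trans (mem_Icc.1 hl).1))
  calc ‖θ (t + 1) - θstar‖
      ≤ ‖(∏ h ∈ Icc τ t, (1 - α h)) • (θ τ - θstar)‖
        + ‖∑ h ∈ Icc τ t, (α h * ∏ l ∈ Icc (h + 1) t, (1 - α l)) • (F (θ h) - F θstar)‖
        + ‖∑ h ∈ Icc τ t, (α h * ∏ l ∈ Icc (h + 1) t, (1 - α l)) • M h‖ := by
        rw [hunroll]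
        simp only [smul_add, sum_add_distrib, ← add_assoc]
        exact norm_add₃_le
    _ ≤ _ := by
        rw [norm_smul, Real.norm_of_nonneg hβ]
        grw [norm_sum_smul_sub_le_of_lipschitz hF _ _ hβtilde]

/-- Error-decomposition lemma (Lemma 1) for the SOR minimax Q-learning recursion.
`ℝ^d` carries the sup norm (`Fin d → ℝ` with the Pi norm). -/
theorem stmt_2 (d : ℕ) (hd : 1 ≤ d) (γ' : ℝ) (hγ' : γ' ∈ Set.Ioo (0 : ℝ) 1)
    (F : (Fin d → ℝ) → (Fin d → ℝ))
    (hF : ∀ x y : Fin d → ℝ, ‖F x - F y‖ ≤ γ' * ‖x - y‖)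
    (θstar : Fin d → ℝ) (hfix : F θstar = θstar)
    (τ : ℕ) (α : ℕ → ℝ) (hα : ∀ t, τ ≤ t → α t ∈ Set.Icc (0 : ℝ) 1)
    (θ M : ℕ → Fin d → ℝ)
    (hrec : ∀ t, τ ≤ t → θ (t + 1) = (1 - α t) • θ t + α t • (F (θ t) + M t)) :
    ∀ t, τ ≤ t →
      ‖θ (t + 1) - θstar‖ ≤
        (∏ h ∈ Finset.Icc τ t, (1 - α h)) * ‖θ τ - θstar‖
        + γ' * ∑ h ∈ Finset.Icc τ t,
            (α h * ∏ l ∈ Finset.Icc (h + 1) t, (1 - α l)) * ‖θ h - θstar‖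
        + ‖∑ h ∈ Finset.Icc τ t, (α h * ∏ l ∈ Finset.Icc (h + 1) t, (1 - α l)) • M h‖ :=
  stmt_2_general d γ' F hF θstar hfix τ α hα θ M hrec
end

section
/- Let H > 0 and t₀ ≥ 4H be real numbers, set α_l = H/(l + t₀) for integers l ≥ 0, and define β̃_{h,t} = α_h ∏_{l=h+1}^{t}(1 − α_l) (empty product equal to 1). Then for all integers 0 ≤ h ≤ t: β̃_{h,t} ≤ (H/(h + t₀)) · ((h + 1 + t₀)/(t + 1 + t₀))^H. -/
/-!
Each factor satisfies `1 - H/x ≤ exp (-H/x) ≤ (x/(x+1))^H` (two applications of `1 + y ≤ exp y`),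
and the right-hand sides telescope along `x = l + t₀`, `l = h+1, …, t`.
-/

open Finset

lemma Real.exp_neg_inv_le_div_add_one {x : ℝ} (hx : 0 < x) : Real.exp (-x⁻¹) ≤ x / (x + 1) := by
  have h : (x + 1) / x ≤ Real.exp x⁻¹ := by
    rw [add_div, div_self hx.ne', add_comm, one_div]
    exact Real.add_one_le_exp x⁻¹
  calc Real.exp (-x⁻¹) = (Real.exp x⁻¹)⁻¹ := Real.exp_neg _
    _ ≤ ((x + 1) / x)⁻¹ := inv_anti₀ (by positivity) h
    _ = x / (x + 1) := inv_div _ _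

lemma one_sub_div_le_div_add_one_rpow {H x : ℝ} (hH : 0 ≤ H) (hx : 0 < x) :
    1 - H / x ≤ (x / (x + 1)) ^ H :=
  calc 1 - H / x ≤ Real.exp (-(H / x)) := by linarith [Real.add_one_le_exp (-(H / x))]
    _ = Real.exp (-x⁻¹) ^ H := by rw [← Real.exp_mul, div_eq_mul_inv]; ring_nf
    _ ≤ (x / (x + 1)) ^ H :=
      Real.rpow_le_rpow (Real.exp_pos _).le (Real.exp_neg_inv_le_div_add_one hx) hH

lemma prod_Icc_one_sub_div_le_rpow {H t₀ : ℝ} (hH : 0 ≤ H) (ht₀ : H ≤ t₀) {h t : ℕ}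
    (hht : h ≤ t) :
    ∏ l ∈ Icc (h + 1) t, (1 - H / ((l : ℝ) + t₀)) ≤
      (((h : ℝ) + 1 + t₀) / ((t : ℝ) + 1 + t₀)) ^ H := by
  have ht₀_nonneg : 0 ≤ t₀ := hH.trans ht₀
  induction t, hht using Nat.le_induction with
  | base => simp [div_self (by positivity : (h : ℝ) + 1 + t₀ ≠ 0)]
  | succ t hht ih =>
    have factor_nonneg : ∀ l : ℕ, 0 ≤ 1 - H / ((l : ℝ) + t₀) := fun l ↦ by
      rw [sub_nonneg]
      exact div_le_one_of_le₀ (by linarith [(Nat.cast_nonneg l : (0 : ℝ) ≤ l)]) (by positivity)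
    rw [prod_Icc_succ_top (by omega)]
    calc (∏ l ∈ Icc (h + 1) t, (1 - H / ((l : ℝ) + t₀))) * (1 - H / (((t + 1 : ℕ) : ℝ) + t₀))
        ≤ (((h : ℝ) + 1 + t₀) / ((t : ℝ) + 1 + t₀)) ^ H *
            (((t : ℝ) + 1 + t₀) / ((t : ℝ) + 1 + t₀ + 1)) ^ H := by
          refine mul_le_mul ih ?_ (factor_nonneg _) (by positivity)
          push_cast
          exact one_sub_div_le_div_add_one_rpow hH (by positivity)
      _ = (((h : ℝ) + 1 + t₀) / (((t + 1 : ℕ) : ℝ) + 1 + t₀)) ^ H := by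
          rw [← Real.mul_rpow (by positivity) (by positivity),
            div_mul_div_cancel₀ (by positivity)]
          push_cast
          ring_nf

/-- Lemma 2, part 1 (second claim): bound on the recursion weights
`β̃_{h,t} = α_h ∏_{l=h+1}^{t} (1 - α_l)` with step sizes `α_l = H / (l + t₀)`.
Here `^` on the right is the real power `Real.rpow`. -/
theorem stmt_5 (H t₀ : ℝ) (hH : 0 < H) (ht₀ : 4 * H ≤ t₀) :
    ∀ h t : ℕ, h ≤ t →
      (H / ((h : ℝ) + t₀)) * ∏ l ∈ Finset.Icc (h + 1) t, (1 - H / ((l : ℝ) + t₀)) ≤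
        (H / ((h : ℝ) + t₀)) * ((((h : ℝ) + 1 + t₀) / ((t : ℝ) + 1 + t₀)) ^ H) := by
  intro h t hht
  have ht₀_nonneg : 0 ≤ t₀ := by linarith
  exact mul_le_mul_of_nonneg_left
    (prod_Icc_one_sub_div_le_rpow hH.le (by linarith) hht) (by positivity)
end

section
/- Let d ≥ 1, let A and B be nonempty finite types, let w ≥ 1 and γ ∈ (0,1) be reals, let r ∈ ℝ, and let ψ, φ : A × B → ℝ^d be feature maps with ∑_{i=1}^{d} |ψ_i(a,b)| ≤ 1 and ∑_{i=1}^{d} |φ_i(a,b)| ≤ 1 for all (a,b) ∈ A × B. Define G : ℝ^d → ℝ by G(θ) = w·( r + γ · min_{a∈A} max_{b∈B} ⟨ψ(a,b), θ⟩ ) + (1 − w) · min_{a∈A} max_{b∈B} ⟨φ(a,b), θ⟩. Then for all θ₁, θ₂ ∈ ℝ^d: |G(θ₁) − G(θ₂)| ≤ (wγ + (w − 1)) · ‖θ₁ − θ₂‖_∞, where ⟨·,·⟩ is the standard inner product on ℝ^d and ‖x‖_∞ = max_i |x_i|. -/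
/-!
Min over a finite set and max over a finite set each move by at most `c` when every entry moves by
at most `c`, so the minimax value is 1-Lipschitz in the payoffs. A payoff `θ ↦ ⟨χ, θ⟩` with
`‖χ‖₁ ≤ 1` is 1-Lipschitz for the sup norm (Hölder). The two minimax terms of the target enter
with the weights `wγ ≥ 0` and `1 - w ≤ 0`, whence the constant `wγ + (w - 1)`.
-/

open Finset

section SupInfLipschitz

variable {ι κ α : Type*} [AddCommGroup α] [LinearOrder α] [IsOrderedAddMonoid α] {c : α}

theorem Finset.sup'_sub_sup'_le {s : Finset ι} (hs : s.Nonempty) {f g : ι → α}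
    (h : ∀ i ∈ s, f i - g i ≤ c) : s.sup' hs f - s.sup' hs g ≤ c :=
  sub_le_iff_le_add.2 <| s.sup'_le hs f fun i hi =>
    (sub_le_iff_le_add.1 (h i hi)).trans (add_le_add_right (s.le_sup' g hi) c)

theorem Finset.inf'_sub_inf'_le {s : Finset ι} (hs : s.Nonempty) {f g : ι → α}
    (h : ∀ i ∈ s, f i - g i ≤ c) : s.inf' hs f - s.inf' hs g ≤ c :=
  sub_le_comm.1 <| s.le_inf' hs g fun i hi =>
    (sub_le_sub_right (s.inf'_le f hi) c).trans (sub_le_comm.1 (h i hi))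

theorem Finset.abs_sup'_sub_sup'_le {s : Finset ι} (hs : s.Nonempty) {f g : ι → α}
    (h : ∀ i ∈ s, |f i - g i| ≤ c) : |s.sup' hs f - s.sup' hs g| ≤ c :=
  abs_sub_le_iff.2 ⟨sup'_sub_sup'_le hs fun i hi => (abs_sub_le_iff.1 (h i hi)).1,
    sup'_sub_sup'_le hs fun i hi => (abs_sub_le_iff.1 (h i hi)).2⟩

theorem Finset.abs_inf'_sub_inf'_le {s : Finset ι} (hs : s.Nonempty) {f g : ι → α}
    (h : ∀ i ∈ s, |f i - g i| ≤ c) : |s.inf' hs f - s.inf' hs g| ≤ c :=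
  abs_sub_le_iff.2 ⟨inf'_sub_inf'_le hs fun i hi => (abs_sub_le_iff.1 (h i hi)).1,
    inf'_sub_inf'_le hs fun i hi => (abs_sub_le_iff.1 (h i hi)).2⟩

theorem Finset.abs_inf'_sup'_sub_inf'_sup'_le {s : Finset ι} {t : Finset κ} (hs : s.Nonempty)
    (ht : t.Nonempty) {f g : ι → κ → α} (h : ∀ i ∈ s, ∀ j ∈ t, |f i j - g i j| ≤ c) :
    |s.inf' hs (fun i => t.sup' ht (f i)) - s.inf' hs (fun i => t.sup' ht (g i))| ≤ c :=
  abs_inf'_sub_inf'_le hs fun i hi => abs_sup'_sub_sup'_le ht (h i hi)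

end SupInfLipschitz

theorem abs_sum_mul_le_sum_abs_mul_norm {ι : Type*} [Fintype ι] (v x : ι → ℝ) :
    |∑ i, v i * x i| ≤ (∑ i, |v i|) * ‖x‖ :=
  calc |∑ i, v i * x i| ≤ ∑ i, |v i| * |x i| := by
        simpa only [abs_mul] using abs_sum_le_sum_abs (fun i => v i * x i) univ
    _ ≤ ∑ i, |v i| * ‖x‖ :=
        sum_le_sum fun i _ => mul_le_mul_of_nonneg_left (norm_le_pi_norm x i) (abs_nonneg _)
    _ = (∑ i, |v i|) * ‖x‖ := (sum_mul _ _ _).symm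

theorem abs_minimax_sum_mul_sub_le {ι A B : Type*} [Fintype ι] [Fintype A] [Fintype B]
    [Nonempty A] [Nonempty B] {χ : A × B → ι → ℝ} (hχ : ∀ p, ∑ i, |χ p i| ≤ 1)
    (θ₁ θ₂ : ι → ℝ) :
    |univ.inf' univ_nonempty (fun a : A => univ.sup' univ_nonempty
        (fun b : B => ∑ i, χ (a, b) i * θ₁ i)) -
      univ.inf' univ_nonempty (fun a : A => univ.sup' univ_nonempty
        (fun b : B => ∑ i, χ (a, b) i * θ₂ i))| ≤ ‖θ₁ - θ₂‖ := by
  refine abs_inf'_sup'_sub_inf'_sup'_le _ _ fun a _ b _ => ?_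
  rw [← sum_sub_distrib]
  simp_rw [← mul_sub, ← Pi.sub_apply θ₁ θ₂]
  exact (abs_sum_mul_le_sum_abs_mul_norm _ _).trans
    (mul_le_of_le_one_left (norm_nonneg _) (hχ (a, b)))

theorem abs_sor_target_sub_le {w γ r x₁ x₂ y₁ y₂ δ : ℝ} (hw : 1 ≤ w) (hγ : 0 ≤ γ)
    (hx : |x₁ - x₂| ≤ δ) (hy : |y₁ - y₂| ≤ δ) :
    |w * (r + γ * x₁) + (1 - w) * y₁ - (w * (r + γ * x₂) + (1 - w) * y₂)|
      ≤ (w * γ + (w - 1)) * δ := by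
  have hwγ : 0 ≤ w * γ := mul_nonneg (zero_le_one.trans hw) hγ
  have hw₁ : 0 ≤ w - 1 := sub_nonneg.2 hw
  calc |w * (r + γ * x₁) + (1 - w) * y₁ - (w * (r + γ * x₂) + (1 - w) * y₂)|
      = |w * γ * (x₁ - x₂) + (w - 1) * (y₂ - y₁)| := by ring_nf
    _ ≤ w * γ * |x₁ - x₂| + (w - 1) * |y₁ - y₂| := by
        refine (abs_add_le _ _).trans_eq ?_
        rw [abs_mul (w * γ), abs_mul (w - 1), abs_of_nonneg hwγ, abs_of_nonneg hw₁,
          abs_sub_comm y₂]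
    _ ≤ (w * γ + (w - 1)) * δ := by
        rw [add_mul]; gcongr

theorem stmt_16_general (d : ℕ)
    {A B : Type*} [Fintype A] [Fintype B] [Nonempty A] [Nonempty B]
    (w γ r : ℝ) (hw : 1 ≤ w) (hγ : γ ∈ Set.Ioo (0 : ℝ) 1)
    (ψ φ : A × B → Fin d → ℝ)
    (hψ : ∀ p : A × B, ∑ i, |ψ p i| ≤ 1)
    (hφ : ∀ p : A × B, ∑ i, |φ p i| ≤ 1)
    (G : (Fin d → ℝ) → ℝ)
    (hG : ∀ θ : Fin d → ℝ,
      G θ = w * (r + γ * Finset.univ.inf' Finset.univ_nonempty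
          (fun a : A => Finset.univ.sup' Finset.univ_nonempty
            (fun b : B => ∑ i, ψ (a, b) i * θ i)))
        + (1 - w) * Finset.univ.inf' Finset.univ_nonempty
          (fun a : A => Finset.univ.sup' Finset.univ_nonempty
            (fun b : B => ∑ i, φ (a, b) i * θ i))) :
    ∀ θ₁ θ₂ : Fin d → ℝ,
      |G θ₁ - G θ₂| ≤ (w * γ + (w - 1)) * ‖θ₁ - θ₂‖ := by
  intro θ₁ θ₂
  rw [hG, hG]
  exact abs_sor_target_sub_le hw hγ.1.le (abs_minimax_sum_mul_sub_le hψ θ₁ θ₂)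
    (abs_minimax_sum_mul_sub_le hφ θ₁ θ₂)

/-- Lipschitz bound for the pointwise SOR minimax Bellman target: with
`G(θ) = w (r + γ min_a max_b ⟨ψ(a,b), θ⟩) + (1-w) min_a max_b ⟨φ(a,b), θ⟩`,
one has `|G(θ₁) - G(θ₂)| ≤ (wγ + (w-1)) ‖θ₁ - θ₂‖_∞`, provided each feature
vector has `ℓ¹`-norm at most `1`. (`Fin d → ℝ` carries the sup norm.) -/
theorem stmt_16 (d : ℕ) (hd : 1 ≤ d)
    {A B : Type*} [Fintype A] [Fintype B] [Nonempty A] [Nonempty B]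
    (w γ r : ℝ) (hw : 1 ≤ w) (hγ : γ ∈ Set.Ioo (0 : ℝ) 1)
    (ψ φ : A × B → Fin d → ℝ)
    (hψ : ∀ p : A × B, ∑ i, |ψ p i| ≤ 1)
    (hφ : ∀ p : A × B, ∑ i, |φ p i| ≤ 1)
    (G : (Fin d → ℝ) → ℝ)
    (hG : ∀ θ : Fin d → ℝ,
      G θ = w * (r + γ * Finset.univ.inf' Finset.univ_nonempty
          (fun a : A => Finset.univ.sup' Finset.univ_nonempty
            (fun b : B => ∑ i, ψ (a, b) i * θ i)))
        + (1 - w) * Finset.univ.inf' Finset.univ_nonempty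
          (fun a : A => Finset.univ.sup' Finset.univ_nonempty
            (fun b : B => ∑ i, φ (a, b) i * θ i))) :
    ∀ θ₁ θ₂ : Fin d → ℝ,
      |G θ₁ - G θ₂| ≤ (w * γ + (w - 1)) * ‖θ₁ - θ₂‖ :=
  stmt_16_general d w γ r hw hγ ψ φ hψ hφ G hG
end
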